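/- arXiv:2511.04490 — 5 statements merged into one kernel-verified Lean document; each statement's English description precedes it below -/
import Mathlib

section
/- Under the stated hypotheses, the mixture density ρ satisfies ∫_D g(y)²/ρ(y) dμ(y) ≤ ∫_D g(y)² dμ(y). (Theorem 4.2, main inequality.) -/
/-!
Write `ρ = (1 - τ) + τ g² / I`. By convexity of `u ↦ 1 / u`,
`1 / ρ ≤ (1 - τ) + τ I / g²`, so pointwise
`g² / ρ ≤ (1 - τ) g² + τ I = g² - I (ρ - 1)`.
The majorant has integral `∫ g² - I (∫ ρ - 1) = ∫ g²` because `ρ` has mass one.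
-/

open MeasureTheory Set

lemma mixture_nonneg {x t I : ℝ} (hx : 0 ≤ x) (ht : t ∈ Icc (0 : ℝ) 1) (hI : 0 ≤ I) :
    0 ≤ (1 - t) + t * (x / I) := by
  have := ht.1; have := ht.2; positivity

lemma div_mixture_le_sub {x t I : ℝ} (hx : 0 ≤ x) (ht : t ∈ Icc (0 : ℝ) 1) (hI : 0 < I) :
    x / ((1 - t) + t * (x / I)) ≤ x - I * ((1 - t) + t * (x / I) - 1) := by
  rcases (mixture_nonneg hx ht hI.le).eq_or_lt with hzero | hpos
  · rw [← hzero, div_zero]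
    nlinarith
  obtain ⟨ht0, ht1⟩ := ht
  rw [div_le_iff₀ hpos, ← mul_le_mul_iff_of_pos_right hI]
  have expand : (x - I * ((1 - t) + t * (x / I) - 1)) * ((1 - t) + t * (x / I)) * I =
      ((1 - t) * x + t * I) * ((1 - t) * I + t * x) := by
    field_simp
    ring
  rw [expand]
  -- the product minus `x * I` is `t (1 - t) (x - I)²`
  nlinarith [mul_nonneg (mul_nonneg ht0 (sub_nonneg.2 ht1)) (sq_nonneg (x - I))]

lemma MeasureTheory.Integrable.mixture {α : Type*} [MeasurableSpace α] {μ : Measure α}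
    [IsFiniteMeasure μ] {f τ : α → ℝ} (hf : Integrable f μ)
    (hτ : AEStronglyMeasurable τ μ) (hτ01 : ∀ y, τ y ∈ Icc (0 : ℝ) 1) (c : ℝ) :
    Integrable (fun y => (1 - τ y) + τ y * (f y / c)) μ := by
  have hτ_bound : ∀ᵐ y ∂μ, ‖τ y‖ ≤ 1 := ae_of_all _ fun y => by
    rw [Real.norm_eq_abs, abs_le]
    exact ⟨by linarith [(hτ01 y).1], (hτ01 y).2⟩
  exact ((integrable_const 1).sub (Integrable.of_bound hτ 1 hτ_bound)).add
    ((hf.div_const c).bdd_mul hτ hτ_bound)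

lemma MeasureTheory.integral_sub_mul_sub_one_of_integral_eq_one {α : Type*} [MeasurableSpace α]
    {μ : Measure α} [IsProbabilityMeasure μ] {f ρ : α → ℝ} (hf : Integrable f μ)
    (hρ : Integrable ρ μ) (hρ1 : ∫ y, ρ y ∂μ = 1) (c : ℝ) :
    ∫ y, (f y - c * (ρ y - 1)) ∂μ = ∫ y, f y ∂μ := by
  have hρ_sub : Integrable (fun y => ρ y - 1) μ := hρ.sub (integrable_const 1)
  rw [integral_sub hf (hρ_sub.const_mul c), integral_const_mul,
    integral_sub hρ (integrable_const 1), hρ1]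
  simp

theorem mixture_density_integral_le_general
    {D : Type*} [MeasurableSpace D] (μ : Measure D) [IsProbabilityMeasure μ]
    (g τ ρt ρ : D → ℝ) (I : ℝ)
    (hIpos : 0 < I)
    (hg2 : Integrable (fun y => (g y) ^ 2) μ)
    (hτ : Measurable τ) (hτ01 : ∀ y, τ y ∈ Set.Icc (0 : ℝ) 1)
    (hρt : ρt = fun y => (g y) ^ 2 / I)
    (hρ : ρ = fun y => (1 - τ y) + τ y * ρt y)
    (hρ1 : ∫ y, ρ y ∂μ = 1) :
    ∫ y, (g y) ^ 2 / ρ y ∂μ ≤ ∫ y, (g y) ^ 2 ∂μ := by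
  subst hρt
  have hρ_int : Integrable ρ μ := hρ ▸ hg2.mixture hτ.aestronglyMeasurable hτ01 I
  have hρ_nonneg (y : D) : 0 ≤ ρ y := hρ ▸ mixture_nonneg (sq_nonneg _) (hτ01 y) hIpos.le
  have hbound (y : D) : (g y) ^ 2 / ρ y ≤ (g y) ^ 2 - I * (ρ y - 1) :=
    hρ ▸ div_mixture_le_sub (sq_nonneg _) (hτ01 y) hIpos
  calc ∫ y, (g y) ^ 2 / ρ y ∂μ
      ≤ ∫ y, ((g y) ^ 2 - I * (ρ y - 1)) ∂μ :=
        integral_mono_of_nonneg (ae_of_all _ fun y => div_nonneg (sq_nonneg _) (hρ_nonneg y))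
          (hg2.sub ((hρ_int.sub (integrable_const 1)).const_mul I)) (ae_of_all _ hbound)
    _ = ∫ y, (g y) ^ 2 ∂μ := integral_sub_mul_sub_one_of_integral_eq_one hg2 hρ_int hρ1 I

/-- Theorem 4.2 (main inequality): for the mixture density
`ρ = (1 - τ) + τ · ρ̃` with `ρ̃ = g² / ∫ g² dμ`, one has
`∫ g²/ρ dμ ≤ ∫ g² dμ`. -/
theorem mixture_density_integral_le
    {D : Type*} [MeasurableSpace D] (μ : Measure D) [IsProbabilityMeasure μ]
    (g τ ρt ρ : D → ℝ) (I : ℝ)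
    (hg : Measurable g) (hg0 : ∀ y, 0 ≤ g y)
    (hI : I = ∫ y, (g y) ^ 2 ∂μ) (hIpos : 0 < I)
    (hg2 : Integrable (fun y => (g y) ^ 2) μ)
    (hτ : Measurable τ) (hτ01 : ∀ y, τ y ∈ Set.Icc (0 : ℝ) 1)
    (hρt : ρt = fun y => (g y) ^ 2 / I)
    (hρ : ρ = fun y => (1 - τ y) + τ y * ρt y)
    (hρ1 : ∫ y, ρ y ∂μ = 1)
    (hρpos : ∀ᵐ y ∂μ, 0 < ρ y) :
    ∫ y, (g y) ^ 2 / ρ y ∂μ ≤ ∫ y, (g y) ^ 2 ∂μ :=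
  mixture_density_integral_le_general μ g τ ρt ρ I hIpos hg2 hτ hτ01 hρt hρ hρ1
end

section
/- Under the stated hypotheses, if in addition the set {y ∈ D : 0 < τ(y) < 1 and ρ̃(y) ≠ 1} has positive μ-measure, then the inequality is strict: ∫_D g(y)²/ρ(y) dμ(y) < ∫_D g(y)² dμ(y). (Theorem 4.2, strict case, with the equality cases of the pointwise Jensen step made precise.) -/
/-!
With `r = ρ̃ y` and `t = τ y`, the pointwise bound `r / ((1 - t) + t r) ≤ (1 - t) r + t` is the
inequality between the weighted harmonic and arithmetic means of `r` and `1`; the gap is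
`t (1 - t) (r - 1)²` up to a positive factor. Multiplied by `I`, it bounds `g² / ρ` by the
majorant `g² + I (1 - ρ)`, whose integral is `∫ g²` because `∫ ρ = 1`. The bound is strict
wherever `0 < τ < 1` and `ρ̃ ≠ 1`, a set of positive measure.
-/

open MeasureTheory

theorem mul_mixture_sub_eq (r t : ℝ) :
    (1 - t + t * r) * ((1 - t) * r + t) - r = t * (1 - t) * (r - 1) ^ 2 := by
  ring

theorem div_mixture_le_mixture {r t : ℝ} (ht₀ : 0 ≤ t) (ht₁ : t ≤ 1)
    (hρ : 0 < 1 - t + t * r) : r / (1 - t + t * r) ≤ (1 - t) * r + t := by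
  rw [div_le_iff₀' hρ]
  nlinarith [mul_mixture_sub_eq r t, mul_nonneg (mul_nonneg ht₀ (sub_nonneg.2 ht₁)) (sq_nonneg (r - 1))]

theorem div_mixture_lt_mixture {r t : ℝ} (ht₀ : 0 < t) (ht₁ : t < 1) (hr : r ≠ 1)
    (hρ : 0 < 1 - t + t * r) : r / (1 - t + t * r) < (1 - t) * r + t := by
  rw [div_lt_iff₀' hρ]
  have : 0 < t * (1 - t) * (r - 1) ^ 2 := by
    have := sub_ne_zero.2 hr
    have := sub_pos.2 ht₁
    positivity
  linarith [mul_mixture_sub_eq r t]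

section

variable {α : Type*} [MeasurableSpace α] {μ : Measure α}

theorem integral_lt_integral_of_ae_le_of_ae_lt_on {f g : α → ℝ} (hf : Integrable f μ)
    (hg : Integrable g μ) (hle : f ≤ᵐ[μ] g) {s : Set α} (hμs : μ s ≠ 0)
    (hlt : ∀ᵐ x ∂μ, x ∈ s → f x < g x) : ∫ x, f x ∂μ < ∫ x, g x ∂μ := by
  have hnonneg : 0 ≤ᵐ[μ] fun x => g x - f x := by
    filter_upwards [hle] with x hx using sub_nonneg.2 hx
  rw [← sub_pos, ← integral_sub hg hf]
  refine (integral_pos_iff_support_of_nonneg_ae hnonneg (hg.sub hf)).2 <|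
    (pos_iff_ne_zero.2 hμs).trans_le (measure_mono_ae ?_)
  filter_upwards [hlt] with x hx hxs
  exact (sub_pos.2 (hx hxs)).ne'

theorem integral_add_mul_one_sub_of_integral_eq_one [IsProbabilityMeasure μ] {f ρ : α → ℝ}
    (hf : Integrable f μ) (hρ : ∫ x, ρ x ∂μ = 1) (c : ℝ) :
    ∫ x, f x + c * (1 - ρ x) ∂μ = ∫ x, f x ∂μ := by
  have hρi : Integrable ρ μ := .of_integral_ne_zero (hρ ▸ one_ne_zero)
  have h1ρ : Integrable (fun x => 1 - ρ x) μ := (integrable_const 1).sub hρi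
  rw [integral_add hf (h1ρ.const_mul c), integral_const_mul,
    integral_sub (integrable_const 1) hρi, hρ]
  simp

end

theorem mixture_density_integral_lt_general
    {D : Type*} [MeasurableSpace D] (μ : Measure D) [IsProbabilityMeasure μ]
    (g τ ρt ρ : D → ℝ) (I : ℝ)
    (hIpos : 0 < I)
    (hg2 : Integrable (fun y => (g y) ^ 2) μ)
    (hτ01 : ∀ y, τ y ∈ Set.Icc (0 : ℝ) 1)
    (hρt : ρt = fun y => (g y) ^ 2 / I)
    (hρ : ρ = fun y => (1 - τ y) + τ y * ρt y)
    (hρ1 : ∫ y, ρ y ∂μ = 1)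
    (hρpos : ∀ᵐ y ∂μ, 0 < ρ y)
    (hstrict : 0 < μ {y | 0 < τ y ∧ τ y < 1 ∧ ρt y ≠ 1}) :
    ∫ y, (g y) ^ 2 / ρ y ∂μ < ∫ y, (g y) ^ 2 ∂μ := by
  have hρi : Integrable ρ μ := .of_integral_ne_zero (hρ1 ▸ one_ne_zero)
  have h1ρ : Integrable (fun y => 1 - ρ y) μ := (integrable_const 1).sub hρi
  have hmajorant : Integrable (fun y => g y ^ 2 + I * (1 - ρ y)) μ := hg2.add (h1ρ.const_mul I)
  have hscale : ∀ y, g y ^ 2 / ρ y = I * (ρt y / ρ y) ∧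
      g y ^ 2 + I * (1 - ρ y) = I * ((1 - τ y) * ρt y + τ y) := fun y => by
    rw [congrFun hρ y, congrFun hρt y]
    constructor
    · field_simp
    · field_simp
      ring
  have hle : ∀ᵐ y ∂μ, g y ^ 2 / ρ y ≤ g y ^ 2 + I * (1 - ρ y) := by
    filter_upwards [hρpos] with y hy
    rw [congrFun hρ y] at hy
    rw [(hscale y).1, (hscale y).2, congrFun hρ y]
    exact mul_le_mul_of_nonneg_left (div_mixture_le_mixture (hτ01 y).1 (hτ01 y).2 hy) hIpos.le
  have hlt : ∀ᵐ y ∂μ, y ∈ {y | 0 < τ y ∧ τ y < 1 ∧ ρt y ≠ 1} →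
      g y ^ 2 / ρ y < g y ^ 2 + I * (1 - ρ y) := by
    filter_upwards [hρpos] with y hy ⟨ht₀, ht₁, hr⟩
    rw [congrFun hρ y] at hy
    rw [(hscale y).1, (hscale y).2, congrFun hρ y]
    exact mul_lt_mul_of_pos_left (div_mixture_lt_mixture ht₀ ht₁ hr hy) hIpos
  have hq : Integrable (fun y => g y ^ 2 / ρ y) μ := by
    refine hmajorant.mono' (hg2.aemeasurable.div hρi.aemeasurable).aestronglyMeasurable ?_
    filter_upwards [hle, hρpos] with y hy hρy
    rwa [Real.norm_of_nonneg (div_nonneg (sq_nonneg _) hρy.le)]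
  calc ∫ y, g y ^ 2 / ρ y ∂μ < ∫ y, g y ^ 2 + I * (1 - ρ y) ∂μ :=
        integral_lt_integral_of_ae_le_of_ae_lt_on hq hmajorant hle hstrict.ne' hlt
    _ = ∫ y, g y ^ 2 ∂μ := integral_add_mul_one_sub_of_integral_eq_one hg2 hρ1 I

/-- Theorem 4.2 (strict case): if additionally the set
`{y | 0 < τ y < 1 and ρ̃ y ≠ 1}` has positive measure, then
`∫ g²/ρ dμ < ∫ g² dμ`. -/
theorem mixture_density_integral_lt
    {D : Type*} [MeasurableSpace D] (μ : Measure D) [IsProbabilityMeasure μ]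
    (g τ ρt ρ : D → ℝ) (I : ℝ)
    (hg : Measurable g) (hg0 : ∀ y, 0 ≤ g y)
    (hI : I = ∫ y, (g y) ^ 2 ∂μ) (hIpos : 0 < I)
    (hg2 : Integrable (fun y => (g y) ^ 2) μ)
    (hτ : Measurable τ) (hτ01 : ∀ y, τ y ∈ Set.Icc (0 : ℝ) 1)
    (hρt : ρt = fun y => (g y) ^ 2 / I)
    (hρ : ρ = fun y => (1 - τ y) + τ y * ρt y)
    (hρ1 : ∫ y, ρ y ∂μ = 1)
    (hρpos : ∀ᵐ y ∂μ, 0 < ρ y)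
    (hstrict : 0 < μ {y | 0 < τ y ∧ τ y < 1 ∧ ρt y ≠ 1}) :
    ∫ y, (g y) ^ 2 / ρ y ∂μ < ∫ y, (g y) ^ 2 ∂μ :=
  mixture_density_integral_lt_general μ g τ ρt ρ I hIpos hg2 hτ01 hρt hρ hρ1 hρpos hstrict
end

section
/- Under the stated hypotheses, ∫_D ρ̃(y)/ρ(y) dμ(y) ≤ 1. (Equation (4.3) in the proof of Theorem 4.2.) -/
open MeasureTheory

lemma pointwise_key (a t r : ℝ) (ha : 0 ≤ a) (ht0 : 0 ≤ t) (ht1 : t ≤ 1)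
    (hr : r = (1 - t) + t * a) (hrpos : 0 < r) : a / r ≤ a + 1 - r := by
  rw [div_le_iff₀ hrpos]
  nlinarith [sq_nonneg (a - 1), mul_nonneg (mul_nonneg ht0 (sub_nonneg.2 ht1)) (sq_nonneg (a-1))]

/-- Equation (4.3) in the proof of Theorem 4.2: `∫ ρ̃/ρ dμ ≤ 1`. -/
theorem mixture_density_ratio_integral_le_one
    {D : Type*} [MeasurableSpace D] (μ : Measure D) [IsProbabilityMeasure μ]
    (g τ ρt ρ : D → ℝ) (I : ℝ)
    (hg : Measurable g) (hg0 : ∀ y, 0 ≤ g y)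
    (hI : I = ∫ y, (g y) ^ 2 ∂μ) (hIpos : 0 < I)
    (hg2 : Integrable (fun y => (g y) ^ 2) μ)
    (hτ : Measurable τ) (hτ01 : ∀ y, τ y ∈ Set.Icc (0 : ℝ) 1)
    (hρt : ρt = fun y => (g y) ^ 2 / I)
    (hρ : ρ = fun y => (1 - τ y) + τ y * ρt y)
    (hρ1 : ∫ y, ρ y ∂μ = 1)
    (hρpos : ∀ᵐ y ∂μ, 0 < ρ y) :
    ∫ y, ρt y / ρ y ∂μ ≤ 1 := by
  have hρt0 : ∀ y, 0 ≤ ρt y := by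
    intro y; rw [hρt]; positivity
  have hρtm : Measurable ρt := by
    rw [hρt]; exact (hg.pow_const 2).div_const I
  have hρm : Measurable ρ := by
    rw [hρ]
    exact ((measurable_const.sub hτ)).add (hτ.mul hρtm)
  have hρtInt : Integrable ρt μ := by
    rw [hρt]; exact hg2.div_const I
  have hρInt : Integrable ρ μ := by
    rw [hρ]
    refine Integrable.add ((integrable_const 1).sub ?_) ?_
    · refine (integrable_const (1:ℝ)).mono' hτ.aemeasurable.aestronglyMeasurable
        (Filter.Eventually.of_forall fun y => by
          rw [Real.norm_eq_abs, abs_of_nonneg (hτ01 y).1]; exact (hτ01 y).2)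
    · refine hρtInt.mono' (hτ.mul hρtm).aemeasurable.aestronglyMeasurable
        (Filter.Eventually.of_forall fun y => ?_)
      rw [Real.norm_eq_abs, abs_of_nonneg (mul_nonneg (hτ01 y).1 (hρt0 y))]
      exact mul_le_of_le_one_left (hρt0 y) (hτ01 y).2
  have hbound : ∀ᵐ y ∂μ, ρt y / ρ y ≤ ρt y + 1 - ρ y := by
    filter_upwards [hρpos] with y hy
    exact pointwise_key (ρt y) (τ y) (ρ y) (hρt0 y) (hτ01 y).1 (hτ01 y).2
      (by rw [hρ]) hy
  have hboundInt : Integrable (fun y => ρt y + 1 - ρ y) μ :=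
    (hρtInt.add (integrable_const 1)).sub hρInt
  have hratioInt : Integrable (fun y => ρt y / ρ y) μ := by
    refine hboundInt.mono' (hρtm.div hρm).aemeasurable.aestronglyMeasurable ?_
    filter_upwards [hbound, hρpos] with y hby hy
    rw [Real.norm_eq_abs, abs_of_nonneg (div_nonneg (hρt0 y) hy.le)]
    exact hby
  have hρtint1 : ∫ y, ρt y ∂μ = 1 := by
    rw [hρt]
    rw [integral_div, ← hI, div_self hIpos.ne']
  calc ∫ y, ρt y / ρ y ∂μ ≤ ∫ y, (ρt y + 1 - ρ y) ∂μ :=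
        integral_mono_ae hratioInt hboundInt hbound
    _ = (∫ y, ρt y ∂μ) + (∫ _, (1:ℝ) ∂μ) - ∫ y, ρ y ∂μ := by
        have h1 : Integrable (fun y => ρt y + 1) μ := hρtInt.add (integrable_const 1)
        rw [integral_sub h1 hρInt, integral_add hρtInt (integrable_const 1)]
    _ = 1 := by simp [hρtint1, hρ1]
end

section
/- Under the stated hypotheses, and assuming additionally that g² is μ-integrable, the variance of the importance-sampled estimand satisfies Var_{ρ·μ}(g/ρ) ≤ Var_μ(g), i.e. ∫_D g²/ρ dμ − (∫_D g dμ)² ≤ ∫_D g² dμ − (∫_D g dμ)². (Variance-reduction corollary of Theorem 4.2.) -/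
/-!
Writing `ρ = (1 - τ) + τ g² / I`, the pointwise bound `g² / ρ ≤ g² + I (1 - ρ)` holds because
the difference of the two sides, multiplied by `ρ`, is `τ (1 - τ) (I - g²)² / I ≥ 0`.
The correction term `I (1 - ρ)` has mean zero since `∫ ρ = 1`, so integrating the bound gives
`∫ g² / ρ ≤ ∫ g²`.
-/

open MeasureTheory

lemma div_le_add_mul_one_sub_of_eq_mixture {a b t ρ : ℝ} (hb : 0 < b) (ht : t ∈ Set.Icc 0 1)
    (hρ : ρ = (1 - t) + t * (a / b)) (hρpos : 0 < ρ) :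
    a / ρ ≤ a + b * (1 - ρ) := by
  obtain ⟨ht0, ht1⟩ := ht
  have hgap : (a + b * (1 - ρ)) * ρ - a = t * (1 - t) * (a - b) ^ 2 / b := by
    subst hρ
    field_simp
    ring
  rw [div_le_iff₀ hρpos]
  have hgap_nonneg : 0 ≤ t * (1 - t) * (a - b) ^ 2 / b := by
    have : 0 ≤ 1 - t := by linarith
    positivity
  linarith

lemma integral_le_of_le_add_mul_one_sub {D : Type*} [MeasurableSpace D] {μ : Measure D}
    [IsProbabilityMeasure μ] {f h ρ : D → ℝ} (c : ℝ) (hf : 0 ≤ᵐ[μ] f) (hh : Integrable h μ)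
    (hρ : ∫ y, ρ y ∂μ = 1) (hle : ∀ᵐ y ∂μ, f y ≤ h y + c * (1 - ρ y)) :
    ∫ y, f y ∂μ ≤ ∫ y, h y ∂μ := by
  have hρint : Integrable ρ μ := .of_integral_ne_zero (by simp [hρ])
  have hcorr : Integrable (fun y => c * (1 - ρ y)) μ :=
    ((integrable_const 1).sub hρint).const_mul c
  calc ∫ y, f y ∂μ ≤ ∫ y, h y + c * (1 - ρ y) ∂μ := integral_mono_of_nonneg hf (hh.add hcorr) hle
    _ = ∫ y, h y ∂μ := by
      rw [integral_add hh hcorr, integral_const_mul, integral_sub (integrable_const 1) hρint, hρ]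
      simp

theorem mixture_density_variance_reduction_general
    {D : Type*} [MeasurableSpace D] (μ : Measure D) [IsProbabilityMeasure μ]
    (g τ ρt ρ : D → ℝ) (I : ℝ)
    (hI : I = ∫ y, (g y) ^ 2 ∂μ) (hIpos : 0 < I)
    (hτ01 : ∀ y, τ y ∈ Set.Icc (0 : ℝ) 1)
    (hρt : ρt = fun y => (g y) ^ 2 / I)
    (hρ : ρ = fun y => (1 - τ y) + τ y * ρt y)
    (hρ1 : ∫ y, ρ y ∂μ = 1)
    (hρpos : ∀ᵐ y ∂μ, 0 < ρ y) :
    (∫ y, (g y) ^ 2 / ρ y ∂μ) - (∫ y, g y ∂μ) ^ 2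
      ≤ (∫ y, (g y) ^ 2 ∂μ) - (∫ y, g y ∂μ) ^ 2 := by
  have hg2 : Integrable (fun y => (g y) ^ 2) μ := .of_integral_ne_zero (hI ▸ hIpos.ne')
  have hbound : ∀ᵐ y ∂μ, (g y) ^ 2 / ρ y ≤ (g y) ^ 2 + I * (1 - ρ y) := by
    filter_upwards [hρpos] with y hy
    exact div_le_add_mul_one_sub_of_eq_mixture hIpos (hτ01 y) (by simp [hρ, hρt]) hy
  have hnonneg : ∀ᵐ y ∂μ, 0 ≤ (g y) ^ 2 / ρ y := by
    filter_upwards [hρpos] with y hy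
    positivity
  linarith [integral_le_of_le_add_mul_one_sub I hnonneg hg2 hρ1 hbound]

/-- Variance-reduction corollary of Theorem 4.2:
`Var_{ρ·μ}(g/ρ) = ∫ g²/ρ dμ − (∫ g dμ)² ≤ ∫ g² dμ − (∫ g dμ)² = Var_μ(g)`. -/
theorem mixture_density_variance_reduction
    {D : Type*} [MeasurableSpace D] (μ : Measure D) [IsProbabilityMeasure μ]
    (g τ ρt ρ : D → ℝ) (I : ℝ)
    (hg : Measurable g) (hg0 : ∀ y, 0 ≤ g y)
    (hI : I = ∫ y, (g y) ^ 2 ∂μ) (hIpos : 0 < I)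
    (hg2 : Integrable (fun y => (g y) ^ 2) μ)
    (hτ : Measurable τ) (hτ01 : ∀ y, τ y ∈ Set.Icc (0 : ℝ) 1)
    (hρt : ρt = fun y => (g y) ^ 2 / I)
    (hρ : ρ = fun y => (1 - τ y) + τ y * ρt y)
    (hρ1 : ∫ y, ρ y ∂μ = 1)
    (hρpos : ∀ᵐ y ∂μ, 0 < ρ y) :
    (∫ y, (g y) ^ 2 / ρ y ∂μ) - (∫ y, g y ∂μ) ^ 2
      ≤ (∫ y, (g y) ^ 2 ∂μ) - (∫ y, g y ∂μ) ^ 2 :=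
  mixture_density_variance_reduction_general μ g τ ρt ρ I hI hIpos hτ01 hρt hρ hρ1 hρpos
end

section
/- Let T > 0, ν > 0, L ≥ 0, C ≥ 0, and let y, g, h : [0,T] → ℝ be functions with y differentiable, y ≥ 0, g ≥ 0, h ≥ 0, and h² integrable on [0,T]. Suppose that for all t ∈ [0,T], (1/2)·y'(t) + ν·g(t)² ≤ L·√(y(t))·g(t) + C·h(t)·g(t). Then for all t ∈ [0,T], √(y(t)) ≤ exp(L²·t/(2ν))·( √(y(0)) + (C/√ν)·(∫₀ᵗ h(s)² ds)^{1/2} ). (Conclusion of Lemma 4.1 in abstract form: the a posteriori L² error bound ‖e(t)‖ ≤ exp(L_f² t/(2ν))·[ ‖e(0)‖ + (C_P/√ν)·‖R(u)‖_{L²(0,t;L²)} ].) -/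
open MeasureTheory intervalIntegral

/-!
Young's inequality absorbs both terms `L √y g` and `C h g` into `ν g²`, leaving the linear
differential inequality `y' ≤ (L²/ν) y + (C²/ν) h²`. Grönwall's lemma, in integrating-factor
form, bounds `y t` by `exp(L² t/ν) (y 0 + (C²/ν) ∫₀ᵗ h²)`, and taking square roots with
`√(a + b) ≤ √a + √b` gives the estimate.
-/

lemma Real.sqrt_add_le_sqrt_add_sqrt {a b : ℝ} (ha : 0 ≤ a) (hb : 0 ≤ b) :
    √(a + b) ≤ √a + √b :=
  Real.sqrt_le_iff.mpr ⟨by positivity, by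
    nlinarith [Real.sq_sqrt ha, Real.sq_sqrt hb,
      mul_nonneg (Real.sqrt_nonneg a) (Real.sqrt_nonneg b)]⟩

lemma Real.sqrt_le_exp_half_mul_of_le_exp_mul {x a b K : ℝ} (ha : 0 ≤ a) (hb : 0 ≤ b)
    (hx : x ≤ Real.exp K * (a + b)) : √x ≤ Real.exp (K / 2) * (√a + √b) :=
  calc √x ≤ √(Real.exp K) * √(a + b) := by
        rw [← Real.sqrt_mul (Real.exp_pos K).le]
        exact Real.sqrt_le_sqrt hx
    _ ≤ Real.exp (K / 2) * (√a + √b) := by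
        rw [← Real.exp_half]
        gcongr
        exact Real.sqrt_add_le_sqrt_add_sqrt ha hb

lemma le_div_mul_sq_add_div_mul_sq_of_energy_ineq {ν L C a g h y' : ℝ} (hν : 0 < ν)
    (hineq : 1 / 2 * y' + ν * g ^ 2 ≤ L * a * g + C * h * g) :
    y' ≤ L ^ 2 / ν * a ^ 2 + C ^ 2 / ν * h ^ 2 := by
  have young : ν * y' ≤ L ^ 2 * a ^ 2 + C ^ 2 * h ^ 2 := by
    nlinarith [sq_nonneg (ν * g - L * a), sq_nonneg (ν * g - C * h)]
  rw [div_mul_eq_mul_div, div_mul_eq_mul_div, ← add_div, le_div_iff₀ hν]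
  linarith

theorem le_exp_mul_add_integral_of_deriv_le {y y' f : ℝ → ℝ} {K a b : ℝ} (hK : 0 ≤ K)
    (hab : a ≤ b) (hy : ∀ t ∈ Set.Icc a b, HasDerivWithinAt y (y' t) (Set.Icc a b) t)
    (hf : IntegrableOn f (Set.Icc a b)) (hf0 : ∀ t ∈ Set.Ioo a b, 0 ≤ f t)
    (hineq : ∀ t ∈ Set.Ioo a b, y' t ≤ K * y t + f t) :
    y b ≤ Real.exp (K * (b - a)) * (y a + ∫ s in a..b, f s) := by
  set w : ℝ → ℝ := fun s => Real.exp (-K * (s - a)) * y s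
  have hw_cont : ContinuousOn w (Set.Icc a b) :=
    (Continuous.continuousOn (by fun_prop)).mul fun t ht => (hy t ht).continuousWithinAt
  have hw_deriv : ∀ t ∈ Set.Ioo a b, HasDerivWithinAt w
      (Real.exp (-K * (t - a)) * (y' t - K * y t)) (Set.Ioi t) t := by
    intro t ht
    have hexp : HasDerivAt (fun s => Real.exp (-K * (s - a)))
        (Real.exp (-K * (t - a)) * -K) t := by
      simpa using (((hasDerivAt_id t).sub_const a).const_mul (-K)).exp
    have hyt : HasDerivWithinAt y (y' t) (Set.Ioi t) t :=
      (hy t (Set.Ioo_subset_Icc_self ht)).mono_of_mem_nhdsWithin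
        (Icc_mem_nhdsGT_of_mem ⟨ht.1.le, ht.2⟩)
    exact (hexp.hasDerivWithinAt.mul hyt).congr_deriv (by ring)
  have hw'_le : ∀ t ∈ Set.Ioo a b, Real.exp (-K * (t - a)) * (y' t - K * y t) ≤ f t := by
    intro t ht
    have hexp_le_one : Real.exp (-K * (t - a)) ≤ 1 :=
      Real.exp_le_one_iff.mpr (by nlinarith [ht.1])
    calc Real.exp (-K * (t - a)) * (y' t - K * y t)
        ≤ Real.exp (-K * (t - a)) * f t := by
          gcongr
          linarith [hineq t ht]
      _ ≤ f t := mul_le_of_le_one_left (hf0 t ht) hexp_le_one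
  have hw_le : w b - w a ≤ ∫ s in a..b, f s :=
    sub_le_integral_of_hasDeriv_right_of_le hab hw_cont hw_deriv hf hw'_le
  have hy_eq : y b = Real.exp (K * (b - a)) * w b := by
    rw [← mul_assoc, ← Real.exp_add, show K * (b - a) + -K * (b - a) = 0 by ring, Real.exp_zero,
      one_mul]
  rw [hy_eq]
  gcongr
  simp only [w, sub_self, mul_zero, Real.exp_zero, one_mul] at hw_le
  linarith

theorem a_posteriori_L2_error_bound_general
    (T ν L C : ℝ) (hν : 0 < ν) (hC : 0 ≤ C)
    (y y' g h : ℝ → ℝ)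
    (hy : ∀ t ∈ Set.Icc (0 : ℝ) T, HasDerivWithinAt y (y' t) (Set.Icc (0 : ℝ) T) t)
    (hy0 : ∀ t ∈ Set.Icc (0 : ℝ) T, 0 ≤ y t)
    (hh2 : IntervalIntegrable (fun s => h s ^ 2) volume 0 T)
    (hineq : ∀ t ∈ Set.Icc (0 : ℝ) T,
      (1 / 2) * y' t + ν * g t ^ 2 ≤ L * Real.sqrt (y t) * g t + C * h t * g t) :
    ∀ t ∈ Set.Icc (0 : ℝ) T,
      Real.sqrt (y t) ≤ Real.exp (L ^ 2 * t / (2 * ν)) *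
        (Real.sqrt (y 0) + (C / Real.sqrt ν) * Real.sqrt (∫ s in (0 : ℝ)..t, h s ^ 2)) := by
  intro t ht
  have hsub : Set.Icc 0 t ⊆ Set.Icc 0 T := Set.Icc_subset_Icc le_rfl ht.2
  have hh2_int : IntegrableOn (fun s => h s ^ 2) (Set.Icc 0 t) :=
    ((intervalIntegrable_iff_integrableOn_Icc_of_le (ht.1.trans ht.2)).mp hh2).mono_set hsub
  have hyt : y t ≤ Real.exp (L ^ 2 / ν * (t - 0)) *
      (y 0 + ∫ s in (0 : ℝ)..t, C ^ 2 / ν * h s ^ 2) := by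
    refine le_exp_mul_add_integral_of_deriv_le (by positivity) ht.1
      (fun s hs => (hy s (hsub hs)).mono hsub) (hh2_int.const_mul _)
      (fun s _ => by positivity) fun s hs => ?_
    have hs' := hsub (Set.Ioo_subset_Icc_self hs)
    simpa [Real.sq_sqrt (hy0 s hs')] using
      le_div_mul_sq_add_div_mul_sq_of_energy_ineq hν (hineq s hs')
  rw [intervalIntegral.integral_const_mul, sub_zero] at hyt
  have hI0 : 0 ≤ ∫ s in (0 : ℝ)..t, h s ^ 2 := integral_nonneg ht.1 fun s _ => sq_nonneg _
  have hforcing : √(C ^ 2 / ν * ∫ s in (0 : ℝ)..t, h s ^ 2) =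
      C / √ν * √(∫ s in (0 : ℝ)..t, h s ^ 2) := by
    rw [Real.sqrt_mul (by positivity), Real.sqrt_div' _ hν.le, Real.sqrt_sq hC]
  rw [show L ^ 2 * t / (2 * ν) = L ^ 2 / ν * t / 2 by ring, ← hforcing]
  exact Real.sqrt_le_exp_half_mul_of_le_exp_mul (hy0 0 ⟨le_rfl, ht.1.trans ht.2⟩)
    (by positivity) hyt

/-- Conclusion of Lemma 4.1 in abstract form: if
`(1/2)·y' + ν·g² ≤ L·√y·g + C·h·g` on `[0,T]`, then
`√(y(t)) ≤ exp(L²t/(2ν))·(√(y(0)) + (C/√ν)·(∫₀ᵗ h²)^{1/2})`. -/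
theorem a_posteriori_L2_error_bound
    (T ν L C : ℝ) (hT : 0 < T) (hν : 0 < ν) (hL : 0 ≤ L) (hC : 0 ≤ C)
    (y y' g h : ℝ → ℝ)
    (hy : ∀ t ∈ Set.Icc (0 : ℝ) T, HasDerivWithinAt y (y' t) (Set.Icc (0 : ℝ) T) t)
    (hy0 : ∀ t ∈ Set.Icc (0 : ℝ) T, 0 ≤ y t)
    (hg0 : ∀ t ∈ Set.Icc (0 : ℝ) T, 0 ≤ g t)
    (hh0 : ∀ t ∈ Set.Icc (0 : ℝ) T, 0 ≤ h t)
    (hh2 : IntervalIntegrable (fun s => h s ^ 2) volume 0 T)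
    (hineq : ∀ t ∈ Set.Icc (0 : ℝ) T,
      (1 / 2) * y' t + ν * g t ^ 2 ≤ L * Real.sqrt (y t) * g t + C * h t * g t) :
    ∀ t ∈ Set.Icc (0 : ℝ) T,
      Real.sqrt (y t) ≤ Real.exp (L ^ 2 * t / (2 * ν)) *
        (Real.sqrt (y 0) + (C / Real.sqrt ν) * Real.sqrt (∫ s in (0 : ℝ)..t, h s ^ 2)) :=
  a_posteriori_L2_error_bound_general T ν L C hν hC y y' g h hy hy0 hh2 hineq
end
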